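/- arXiv:2204.08300 — 7 statements merged into one kernel-verified Lean document; each statement's English description precedes it below -/
import Mathlib

section
/- The pairwise dominance extension of a strict linear order is antisymmetric on finite sets: if S ≿^PD T and T ≿^PD S for finite sets S, T of objects, then S = T. -/
open Finset

noncomputable section

abbrev Obj := ℕ

def PD (r : Obj → Obj → Prop) (S T : Finset Obj) : Prop :=
  ∃ μ : {x // x ∈ T} → {x // x ∈ S}, Function.Injective μ ∧ ∀ x, r (μ x).1 x.1

def StrictPD (r : Obj → Obj → Prop) (S T : Finset Obj) : Prop :=
  PD r S T ∧ ¬ PD r T S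

def LinProfile {n : ℕ} (pref : Fin n → Obj → Obj → Prop) : Prop :=
  ∀ i, IsLinearOrder Obj (pref i)

def IsAlloc {n : ℕ} (A : Fin n → Finset Obj) (X : Finset Obj) : Prop :=
  (∀ i, A i ⊆ X) ∧ ∀ i j, i ≠ j → Disjoint (A i) (A j)

open Classical in
def topOf (r : Obj → Obj → Prop) (X : Finset Obj) : Obj :=
  if h : ∃ m ∈ X, ∀ x ∈ X, r m x then h.choose else 0

def remaining {n : ℕ} (pref : Fin n → Obj → Obj → Prop) (f : ℕ → Fin n)
    (X : Finset Obj) : ℕ → Finset Obj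
  | 0 => X
  | k + 1 => (remaining pref f X k).erase (topOf (pref (f k)) (remaining pref f X k))

def draft {n : ℕ} (pref : Fin n → Obj → Obj → Prop) (f : ℕ → Fin n)
    (X : Finset Obj) (i : Fin n) : Finset Obj :=
  ((Finset.range X.card).filter (fun k => f k = i)).image
    (fun k => topOf (pref (f k)) (remaining pref f X k))

def roundRobin {n : ℕ} (hn : 0 < n) (π : Equiv.Perm (Fin n)) (k : ℕ) : Fin n :=
  π.symm ⟨k % n, Nat.mod_lt k hn⟩

def draftPi {n : ℕ} (hn : 0 < n) (pref : Fin n → Obj → Obj → Prop)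
    (π : Equiv.Perm (Fin n)) (X : Finset Obj) (i : Fin n) : Finset Obj :=
  draft pref (roundRobin hn π) X i

/-- Iterating `σ` only descends along `r`, and an injective self-map of a finite type is periodic,
so the descent from `σ i` returns to `i`. -/
theorem Function.Injective.rel_apply_of_forall_rel {ι α : Type*} [Finite ι] {r : α → α → Prop}
    [Std.Refl r] [IsTrans α r] (f : ι → α) {σ : ι → ι} (hσ : Function.Injective σ)
    (hdesc : ∀ i, r (f (σ i)) (f i)) (i : ι) : r (f i) (f (σ i)) := by
  have iterate_rel : ∀ (k : ℕ) (j : ι), r (f (σ^[k] j)) (f j) := by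
    intro k
    induction k with
    | zero => exact fun j => refl _
    | succ k ih => exact fun j => _root_.trans (ih (σ j)) (hdesc j)
  obtain ⟨n, hn, hperiod⟩ := hσ.mem_periodicPts i
  obtain ⟨m, rfl⟩ := Nat.exists_eq_succ_of_ne_zero hn.ne'
  have hback : σ^[m] (σ i) = i := hperiod.eq
  simpa only [hback] using iterate_rel m (σ i)

theorem PD.subset {r : Obj → Obj → Prop} [IsPartialOrder Obj r] {S T : Finset Obj}
    (hST : PD r S T) (hTS : PD r T S) : S ⊆ T := by
  obtain ⟨μ, hμ_inj, hμ⟩ := hST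
  obtain ⟨ν, hν_inj, hν⟩ := hTS
  intro x hx
  have hround : r x (μ (ν ⟨x, hx⟩)) :=
    (hμ_inj.comp hν_inj).rel_apply_of_forall_rel Subtype.val
      (fun y => _root_.trans (hμ (ν y)) (hν y)) ⟨x, hx⟩
  have hνx : (ν ⟨x, hx⟩).1 = x := antisymm (hν _) (_root_.trans hround (hμ _))
  exact hνx ▸ (ν ⟨x, hx⟩).2

theorem pd_antisymm (r : Obj → Obj → Prop) (hr : IsLinearOrder Obj r)
    (S T : Finset Obj) (hST : PD r S T) (hTS : PD r T S) : S = T :=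
  (hST.subset hTS).antisymm (hTS.subset hST)
end
end

section
/- For finite sets S, T of objects and a strict linear order ≿, S ≿^PD T holds if and only if |S| ≥ |T| and, writing the elements of each set in decreasing ≿-order, the k-th best element of S is ≿-at-least the k-th best element of T for every k ≤ |T|. -/
/-!
If `μ : T → S` is injective with `μ x ≿ x`, the images of the `k + 1` best elements of `T` are
`k + 1` distinct elements of `S`, each at least as good as the `k`-th best element `t` of `T`; if the
`k`-th best element of `S` were not `≿ t`, they would all lie among the first `k` elements of `S`,
which is impossible. Conversely, sending the `k`-th best element of `T` to the `k`-th best element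
of `S` is such an injection.
-/

open Finset

noncomputable section

namespace List

variable {α : Type*} {r : α → α → Prop}

theorem Pairwise.rel_getElem_of_le [Std.Refl r] {l : List α} (hl : l.Pairwise r) {i j : ℕ}
    (hij : i ≤ j) (hj : j < l.length) : r l[i] l[j] := by
  rcases hij.eq_or_lt with rfl | hlt
  · exact refl _
  · exact pairwise_iff_getElem.1 hl i j _ hj hlt

theorem Pairwise.rel_getElem_of_mem_take [Std.Refl r] {l : List α} (hl : l.Pairwise r) {k : ℕ}
    (hk : k < l.length) {x : α} (hx : x ∈ l.take (k + 1)) : r x l[k] := by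
  obtain ⟨i, hi, rfl⟩ := mem_take_iff_getElem.1 hx
  exact hl.rel_getElem_of_le (by omega) hk

theorem Pairwise.mem_take_of_not_rel [Std.Refl r] [IsTrans α r] {l : List α} (hl : l.Pairwise r)
    {k : ℕ} (hk : k < l.length) {x t : α} (hx : x ∈ l) (hxt : r x t) (hkt : ¬ r l[k] t) :
    x ∈ l.take k := by
  obtain ⟨i, hi, rfl⟩ := getElem_of_mem hx
  have hik : i < k := by
    by_contra! hki
    exact hkt (_root_.trans (hl.rel_getElem_of_le hki hi) hxt)
  exact mem_take_iff_getElem.2 ⟨i, by omega, rfl⟩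

theorem Pairwise.rel_getElem_of_injOn [DecidableEq α] [Std.Refl r] [IsTrans α r]
    {l₁ l₂ : List α} (h₁ : l₁.Pairwise r) (h₂ : l₂.Pairwise r) (hn₂ : l₂.Nodup) {f : α → α}
    (hinj : Set.InjOn f {x | x ∈ l₂}) (hmaps : Set.MapsTo f {x | x ∈ l₂} {x | x ∈ l₁})
    (hrel : ∀ x ∈ l₂, r (f x) x) {k : ℕ} (hk₁ : k < l₁.length) (hk₂ : k < l₂.length) :
    r l₁[k] l₂[k] := by
  by_contra hk
  have hmapsTo : Set.MapsTo f ↑(l₂.take (k + 1)).toFinset ↑(l₁.take k).toFinset := by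
    intro x hx
    simp only [coe_toFinset] at hx ⊢
    have hx₂ := mem_of_mem_take hx
    exact h₁.mem_take_of_not_rel hk₁ (hmaps hx₂)
      (_root_.trans (hrel x hx₂) (h₂.rel_getElem_of_mem_take hk₂ hx)) hk
  have hinjTake : Set.InjOn f ↑(l₂.take (k + 1)).toFinset :=
    hinj.mono fun x hx => mem_of_mem_take (mem_toFinset.1 hx)
  have : k + 1 ≤ k := calc
    k + 1 = (l₂.take (k + 1)).toFinset.card := by
      rw [toFinset_card_of_nodup (hn₂.sublist (take_sublist _ _)), length_take]; omega
    _ ≤ (l₁.take k).toFinset.card := Finset.card_le_card_of_injOn f hmapsTo hinjTake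
    _ ≤ (l₁.take k).length := toFinset_card_le _
    _ ≤ k := length_take_le _ _
  omega

theorem exists_injOn_of_rel_getElem [DecidableEq α] {l₁ l₂ : List α} (hn₁ : l₁.Nodup)
    (hlen : l₂.length ≤ l₁.length)
    (h : ∀ k (hk₂ : k < l₂.length) (hk₁ : k < l₁.length), r l₁[k] l₂[k]) :
    ∃ f : α → α, Set.InjOn f {x | x ∈ l₂} ∧ Set.MapsTo f {x | x ∈ l₂} {x | x ∈ l₁} ∧
      ∀ x ∈ l₂, r (f x) x := by
  have hidx : ∀ x ∈ l₂, l₂.idxOf x < l₁.length :=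
    fun x hx => (idxOf_lt_length_iff.2 hx).trans_le hlen
  refine ⟨fun x => l₁.getD (l₂.idxOf x) x, fun a ha b hb hab => ?_, fun x hx => ?_, fun x hx => ?_⟩
  · simp only [getD_eq_getElem _ _ (hidx a ha), getD_eq_getElem _ _ (hidx b hb),
      hn₁.getElem_inj_iff] at hab
    exact (idxOf_inj ha).1 hab
  · simp only [getD_eq_getElem _ _ (hidx x hx)]
    exact getElem_mem _
  · have := h _ (idxOf_lt_length_iff.2 hx) (hidx x hx)
    simp only [getD_eq_getElem _ _ (hidx x hx)]
    rwa [getElem_idxOf] at this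

end List

theorem pd_iff_exists_injOn {r : Obj → Obj → Prop} {S T : Finset Obj} :
    PD r S T ↔ ∃ f : Obj → Obj, Set.InjOn f T ∧ Set.MapsTo f T S ∧ ∀ x ∈ T, r (f x) x := by
  classical
  constructor
  · rintro ⟨μ, hμ, hrel⟩
    refine ⟨fun x => if h : x ∈ T then μ ⟨x, h⟩ else x, fun a ha b hb hab => ?_,
      fun x hx => ?_, fun x hx => ?_⟩
    · simp only [Finset.mem_coe] at ha hb
      simp only [ha, hb, dite_true] at hab
      exact congrArg Subtype.val (hμ (Subtype.ext hab))
    · simp [Finset.mem_coe.1 hx]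
    · simpa [hx] using hrel ⟨x, hx⟩
  · rintro ⟨f, hinj, hmaps, hrel⟩
    exact ⟨hmaps.restrict f T S, hmaps.restrict_inj.2 hinj, fun x => hrel x x.2⟩

theorem pd_iff_rankwise (r : Obj → Obj → Prop) (hr : IsLinearOrder Obj r)
    (S T : Finset Obj) (LS LT : List Obj)
    (hSn : LS.Nodup) (hSe : LS.toFinset = S) (hSs : LS.Pairwise r)
    (hTn : LT.Nodup) (hTe : LT.toFinset = T) (hTs : LT.Pairwise r) :
    PD r S T ↔
      T.card ≤ S.card ∧
        ∀ k (hkT : k < LT.length) (hkS : k < LS.length),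
          r (LS.get ⟨k, hkS⟩) (LT.get ⟨k, hkT⟩) := by
  subst hSe hTe
  rw [pd_iff_exists_injOn]
  constructor
  · rintro ⟨f, hinj, hmaps, hrel⟩
    refine ⟨Finset.card_le_card_of_injOn f hmaps hinj, fun k hkT hkS => ?_⟩
    simp only [List.coe_toFinset, List.mem_toFinset] at hinj hmaps hrel
    exact hSs.rel_getElem_of_injOn hTs hTn hinj hmaps hrel hkS hkT
  · rintro ⟨hcard, hrank⟩
    rw [List.toFinset_card_of_nodup hSn, List.toFinset_card_of_nodup hTn] at hcard
    simpa only [List.coe_toFinset, List.mem_toFinset] using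
      List.exists_injOn_of_rel_getElem hSn hcard hrank
end
end

section
/- If S ≿^PD T and S ≠ T are finite sets with |S| = |T| ≥ 1, and elements of each are listed in decreasing preference order x_1 ≻ ⋯ ≻ x_k (for S) and y_1 ≻ ⋯ ≻ y_k (for T) with T ≿^PD S via the canonical rank-preserving injection, then the top element of S \ T is strictly preferred to the top element of T \ S. -/
/-! Let `j₀` be the first rank at which the two sorted lists differ. Then `x_{j₀} ∉ T`: an
earlier `y_i` equals `x_i ≠ x_{j₀}`, and a later `y_i = x_{j₀}` would give
`y_{j₀} ≿ y_i = x_{j₀} ≿ y_{j₀}`. Every element of `T \ S` is some `y_i` with `i ≥ j₀`, since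
earlier `y`'s lie in `S`. Hence `top (S \ T) ≿ x_{j₀} ≿ y_{j₀} ≿ top (T \ S)`, and the two tops
differ because only the second lies in `T`. -/

open Finset

noncomputable section

section FirstMismatch

variable {α ι : Type*} (r : α → α → Prop) [LinearOrder ι] {xs ys : ι → α} {j₀ : ι}

theorem exists_first_mismatch [WellFoundedLT ι] (h : ∃ j, xs j ≠ ys j) :
    ∃ j₀, xs j₀ ≠ ys j₀ ∧ ∀ i < j₀, xs i = ys i := by
  obtain ⟨j₀, hj₀, hmin⟩ := wellFounded_lt.has_min {j | xs j ≠ ys j} h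
  exact ⟨j₀, hj₀, fun i hi => not_not.1 fun hne => hmin i hne hi⟩

theorem first_mismatch_not_mem_range [Std.Antisymm r] (hx : ∀ i j, i < j → xs i ≠ xs j)
    (hy : ∀ i j, i < j → r (ys i) (ys j)) (hdom : ∀ j, r (xs j) (ys j))
    (hne : xs j₀ ≠ ys j₀) (hagree : ∀ i < j₀, xs i = ys i) :
    xs j₀ ∉ Set.range ys := by
  rintro ⟨i, hi⟩
  rcases lt_trichotomy i j₀ with hlt | rfl | hgt
  · exact hx i j₀ hlt ((hagree i hlt).trans hi)
  · exact hne hi.symm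
  · exact hne (antisymm (hdom j₀) (hi ▸ hy j₀ i hgt))

theorem first_mismatch_rel_of_mem_range_diff [Std.Refl r]
    (hy : ∀ i j, i < j → r (ys i) (ys j)) (hagree : ∀ i < j₀, xs i = ys i) {c : α}
    (hcy : c ∈ Set.range ys) (hcx : c ∉ Set.range xs) : r (ys j₀) c := by
  obtain ⟨i, rfl⟩ := hcy
  rcases lt_or_ge i j₀ with hlt | hge
  · exact absurd ⟨i, hagree i hlt⟩ hcx
  · rcases hge.eq_or_lt with rfl | hgt
    · exact refl _
    · exact hy j₀ i hgt

end FirstMismatch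

theorem top_surplus_strictly_preferred_general (r : Obj → Obj → Prop) (hr : IsLinearOrder Obj r)
    (S T : Finset Obj) (k : ℕ)
    (xs ys : Fin k → Obj)
    (hxsS : ∀ a, a ∈ S ↔ ∃ j, xs j = a) (hysT : ∀ a, a ∈ T ↔ ∃ j, ys j = a)
    (hxsdec : ∀ j j' : Fin k, j < j' → r (xs j) (xs j') ∧ xs j ≠ xs j')
    (hysdec : ∀ j j' : Fin k, j < j' → r (ys j) (ys j') ∧ ys j ≠ ys j')
    (hdom : ∀ j : Fin k, r (xs j) (ys j)) :
    ∀ a ∈ S \ T, (∀ b ∈ S \ T, r a b) →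
      ∀ c ∈ T \ S, (∀ d ∈ T \ S, r c d) → r a c ∧ a ≠ c := by
  intro a haST hatop c hcTS _
  obtain ⟨haS, haT⟩ := mem_sdiff.1 haST
  obtain ⟨hcT, hcS⟩ := mem_sdiff.1 hcTS
  obtain ⟨j, rfl⟩ := (hxsS a).1 haS
  have hy : ∀ i j, i < j → r (ys i) (ys j) := fun i j h => (hysdec i j h).1
  obtain ⟨j₀, hne₀, hagree⟩ :=
    exists_first_mismatch ⟨j, fun h => haT ((hysT _).2 ⟨j, h.symm⟩)⟩
  have hxT : xs j₀ ∉ T := fun h => first_mismatch_not_mem_range r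
    (fun i j h => (hxsdec i j h).2) hy hdom hne₀ hagree ((hysT _).1 h)
  have hax : r (xs j) (xs j₀) := hatop _ (mem_sdiff.2 ⟨(hxsS _).2 ⟨j₀, rfl⟩, hxT⟩)
  have hyc : r (ys j₀) c := first_mismatch_rel_of_mem_range_diff r hy hagree
    ((hysT c).1 hcT) (fun h => hcS ((hxsS c).2 h))
  exact ⟨_root_.trans hax (_root_.trans (hdom j₀) hyc), fun h => haT (h ▸ hcT)⟩

theorem top_surplus_strictly_preferred (r : Obj → Obj → Prop) (hr : IsLinearOrder Obj r)
    (S T : Finset Obj) (hne : S ≠ T) (k : ℕ) (hk : 1 ≤ k)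
    (hScard : S.card = k) (hTcard : T.card = k)
    (xs ys : Fin k → Obj)
    (hxsS : ∀ a, a ∈ S ↔ ∃ j, xs j = a) (hysT : ∀ a, a ∈ T ↔ ∃ j, ys j = a)
    (hxsdec : ∀ j j' : Fin k, j < j' → r (xs j) (xs j') ∧ xs j ≠ xs j')
    (hysdec : ∀ j j' : Fin k, j < j' → r (ys j) (ys j') ∧ ys j ≠ ys j')
    (hdom : ∀ j : Fin k, r (xs j) (ys j)) :
    ∀ a ∈ S \ T, (∀ b ∈ S \ T, r a b) →
      ∀ c ∈ T \ S, (∀ d ∈ T \ S, r c d) → r a c ∧ a ≠ c :=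
  top_surplus_strictly_preferred_general r hr S T k xs ys hxsS hysT hxsdec hysdec hdom
end
end

section
/- An allocation rule on problems (≿, X) — with N a fixed finite set of n ≥ 2 agents, X a finite nonempty set of available objects, and agents having strict linear preferences over all potential objects — is Pareto efficient with respect to pairwise dominance if and only if it is non-wasteful (allocates all of X) and robust against trades (the binary relation ▶ on agent–object pairs defined by (i,x) ▶ (j,y) iff x is assigned to i, y ≻_i x, and i ≠ j, is acyclic). -/
open Finset

noncomputable section

/-!
Efficiency forces non-wastefulness, since an unassigned object can be added to any bundle, and
robustness, since rotating the objects along a simple trading cycle (`List.formPerm`) gives every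
agent on it a better object. Conversely, let `A` cover `X` and let `B ≠ A` dominate it through
injections `μ i : A i → B i`. Counting forces `#(A i) = #(B i)`, so some object is moved by its
`μ`, and the image of a moved object is again moved (by injectivity and disjointness of `B`). The
finitely many moved objects therefore carry a cycle of weak improvements, and merging consecutive
steps inside one agent's bundle (transitivity and antisymmetry) turns it into a `▶`-cycle.
-/

open Relation

namespace List

variable {α : Type*} {r : α → α → Prop}

def IsCyclicChain (r : α → α → Prop) (l : List α) : Prop :=
  ∀ k (hk : k < l.length), r l[k] (l[(k + 1) % l.length]'(Nat.mod_lt _ (by omega)))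

theorem exists_isCyclicChain_of_transGen {a : α} (h : TransGen r a a) :
    ∃ l : List α, l ≠ [] ∧ l.IsCyclicChain r := by
  obtain ⟨b, hab, hba⟩ := TransGen.head'_iff.1 h
  obtain ⟨l, hchain, hlast⟩ := exists_isChain_cons_of_relationReflTransGen hba
  refine ⟨b :: l, cons_ne_nil _ _, fun k hk => ?_⟩
  rcases Nat.lt_or_ge (k + 1) (b :: l).length with hlt | hge
  · simpa only [Nat.mod_eq_of_lt hlt] using hchain.getElem k hlt
  · have hk' : k + 1 = (b :: l).length := by omega
    have hlast' : (b :: l)[k] = a := by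
      rw [← hlast, getLast_eq_getElem]; simp only [← hk', Nat.add_sub_cancel]
    simpa only [hk', Nat.mod_self, hlast', getElem_cons_zero] using hab

theorem IsCyclicChain.take_drop {l : List α} (hl : l.IsCyclicChain r) {i j : ℕ} (hij : i < j)
    (hj : j < l.length) (heq : l[i] = l[j]) : ((l.drop i).take (j - i)).IsCyclicChain r := by
  intro k hk
  simp only [length_take, length_drop] at hk ⊢
  have hmin : min (j - i) (l.length - i) = j - i := by omega
  simp only [getElem_take, getElem_drop, hmin]
  have hstep := hl (i + k) (by omega)
  rcases Nat.lt_or_ge (k + 1) (j - i) with hlt | hge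
  · have e1 : (i + k + 1) % l.length = i + (k + 1) % (j - i) := by
      rw [Nat.mod_eq_of_lt hlt, Nat.mod_eq_of_lt (by omega)]; omega
    simpa only [e1] using hstep
  · have e1 : (i + k + 1) % l.length = j := by rw [Nat.mod_eq_of_lt (by omega)]; omega
    have e2 : i + (k + 1) % (j - i) = i := by
      rw [show k + 1 = j - i by omega, Nat.mod_self, Nat.add_zero]
    simpa only [e1, e2, heq] using hstep

theorem IsCyclicChain.exists_nodup {l : List α} (hl : l.IsCyclicChain r) (hne : l ≠ []) :
    ∃ l' : List α, l' ≠ [] ∧ l'.Nodup ∧ l'.IsCyclicChain r := by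
  induction hlen : l.length using Nat.strong_induction_on generalizing l with
  | _ m ih =>
  by_cases hnd : l.Nodup
  · exact ⟨l, hne, hnd, hl⟩
  obtain ⟨i, j, hij, hj, heq⟩ := by simpa [nodup_iff_getElem?_ne_getElem?] using hnd
  rw [getElem?_eq_getElem (hij.trans hj), getElem?_eq_getElem hj, Option.some_inj] at heq
  have hlen' : ((l.drop i).take (j - i)).length = j - i := by
    simp only [length_take, length_drop]; omega
  exact ih (j - i) (by omega) (hl.take_drop hij hj heq) (ne_nil_of_length_pos (by omega)) hlen'

end List

namespace Set

theorem Finite.exists_transGen_self {α : Type*} {r : α → α → Prop} {s : Set α} (hs : s.Finite)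
    (hne : s.Nonempty) (h : ∀ x ∈ s, ∃ y ∈ s, r x y) : ∃ x, TransGen r x x := by
  by_contra! hacyc
  have : Finite s := hs
  let t : s → s → Prop := fun a b => TransGen r b a
  have : IsTrans s t := ⟨fun _ _ _ hab hbc => hbc.trans hab⟩
  have : Std.Irrefl t := ⟨fun a => hacyc a⟩
  obtain ⟨m, -, hmin⟩ :=
    (Finite.wellFounded_of_trans_of_irrefl t).has_min Set.univ ⟨⟨_, hne.some_mem⟩, trivial⟩
  obtain ⟨y, hy, hmy⟩ := h m m.2
  exact hmin ⟨y, hy⟩ trivial (.single hmy)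

end Set

namespace Relation.TransGen

theorem exists_self_across_fibers {α β : Type*} {r : α → α → Prop} (f : α → β)
    (hirr : ∀ x, ¬ r x x) (hmerge : ∀ x y z, r x y → r y z → f x = f y → r x z) {a : α}
    (h : TransGen r a a) : ∃ b, TransGen (fun x y => r x y ∧ f x ≠ f y) b b := by
  -- `d` is the first point of the last run of steps inside a single fibre.
  have hsplit : ∀ {c}, TransGen r a c →
      ∃ d, ReflTransGen (fun x y => r x y ∧ f x ≠ f y) a d ∧ r d c := by
    intro c hc
    induction hc with
    | single hac => exact ⟨a, .refl, hac⟩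
    | @tail b c _ hbc ih =>
      obtain ⟨d, hd, hdb⟩ := ih
      by_cases hf : f d = f b
      · exact ⟨d, hd, hmerge _ _ _ hdb hbc hf⟩
      · exact ⟨b, hd.tail ⟨hdb, hf⟩, hbc⟩
  obtain ⟨d, had, hda⟩ := hsplit h
  by_cases hf : f d = f a
  · rcases had.cases_head with rfl | ⟨e, hae, hed⟩
    · exact absurd hda (hirr _)
    · exact ⟨e, tail' hed ⟨hmerge _ _ _ hda hae.1 hf, hf ▸ hae.2⟩⟩
  · exact ⟨a, tail' had ⟨hda, hf⟩⟩

end Relation.TransGen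

theorem PD.of_subset {r : Obj → Obj → Prop} (hr : ∀ x, r x x) {S T : Finset Obj} (h : T ⊆ S) :
    PD r S T :=
  ⟨fun x => ⟨x.1, h x.2⟩, fun _ _ hab => Subtype.ext (Subtype.mk.inj hab), fun x => hr x.1⟩

theorem PD.card_le {r : Obj → Obj → Prop} {S T : Finset Obj} (h : PD r S T) : #T ≤ #S := by
  obtain ⟨μ, hμ, -⟩ := h
  simpa using Fintype.card_le_of_injective μ hμ

section Allocation

variable {n : ℕ} {pref : Fin n → Obj → Obj → Prop} {X : Finset Obj} {A B : Fin n → Finset Obj}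

def IsEfficient (pref : Fin n → Obj → Obj → Prop) (X : Finset Obj) (A : Fin n → Finset Obj) :
    Prop :=
  ¬ ∃ B : Fin n → Finset Obj, IsAlloc B X ∧ B ≠ A ∧ ∀ i, PD (pref i) (B i) (A i)

def tradeRel (pref : Fin n → Obj → Obj → Prop) (A : Fin n → Finset Obj) (p q : Fin n × Obj) :
    Prop :=
  p.2 ∈ A p.1 ∧ pref p.1 q.2 p.2 ∧ q.2 ≠ p.2 ∧ p.1 ≠ q.1

def objTradeRel (pref : Fin n → Obj → Obj → Prop) (A : Fin n → Finset Obj) (x y : Obj) : Prop :=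
  ∃ i j, i ≠ j ∧ x ∈ A i ∧ y ∈ A j ∧ pref i y x

namespace IsAlloc

theorem eq_of_mem_of_mem (hA : IsAlloc A X) {x : Obj} {i j : Fin n} (hi : x ∈ A i)
    (hj : x ∈ A j) : i = j := by
  by_contra hij
  exact disjoint_left.1 (hA.2 i j hij) hi hj

theorem card_biUnion (hA : IsAlloc A X) : #(univ.biUnion A) = ∑ i, #(A i) :=
  Finset.card_biUnion fun i _ j _ hij => hA.2 i j hij

theorem sum_card_le (hA : IsAlloc A X) : ∑ i, #(A i) ≤ #X := by
  rw [← hA.card_biUnion]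
  exact card_le_card (biUnion_subset.2 fun i _ => hA.1 i)

theorem card_eq_of_PD (hA : IsAlloc A X) (hcover : univ.biUnion A = X) (hB : IsAlloc B X)
    (hPD : ∀ i, PD (pref i) (B i) (A i)) (i : Fin n) : #(A i) = #(B i) := by
  have hle : ∀ i ∈ univ, #(A i) ≤ #(B i) := fun i _ => (hPD i).card_le
  have hsum : ∑ i, #(B i) ≤ ∑ i, #(A i) := by
    rw [← hA.card_biUnion, hcover]
    exact hB.sum_card_le
  exact (sum_eq_sum_iff_of_le hle).1 ((sum_le_sum hle).antisymm hsum) i (mem_univ i)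

end IsAlloc

theorem IsEfficient.biUnion_eq [NeZero n] (hrefl : ∀ i x, pref i x x) (hA : IsAlloc A X)
    (heff : IsEfficient pref X A) : univ.biUnion A = X := by
  refine (biUnion_subset.2 fun i _ => hA.1 i).antisymm fun z hzX => ?_
  by_contra hz
  simp only [mem_biUnion, mem_univ, true_and, not_exists] at hz
  refine heff
    ⟨Function.update A 0 (insert z (A 0)), ⟨fun i => ?_, fun i j hij => ?_⟩, ?_, fun i => ?_⟩
  · rcases eq_or_ne i 0 with rfl | hi
    · simpa [insert_subset_iff] using ⟨hzX, hA.1 0⟩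
    · simpa [hi] using hA.1 i
  · rcases eq_or_ne i 0 with rfl | hi <;> rcases eq_or_ne j 0 with rfl | hj
    · exact absurd rfl hij
    · simpa [hj, hz j] using hA.2 0 j hij
    · simpa [hi, hz i] using hA.2 i 0 hij
    · simpa [hi, hj] using hA.2 i j hij
  · intro h
    exact hz 0 (by simpa using congrFun h 0)
  · rcases eq_or_ne i 0 with rfl | hi
    · simpa using PD.of_subset (hrefl 0) (subset_insert z (A 0))
    · simpa [hi] using PD.of_subset (hrefl i) (Subset.refl (A i))

theorem transGen_objTradeRel {p q : Fin n × Obj} (h : TransGen (tradeRel pref A) p q)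
    (hq : q.2 ∈ A q.1) : TransGen (objTradeRel pref A) p.2 q.2 := by
  induction h with
  | single hpq => exact .single ⟨_, _, hpq.2.2.2, hpq.1, hq, hpq.2.1⟩
  | tail _ hbq ih => exact (ih hbq.1).tail ⟨_, _, hbq.2.2.2, hbq.1, hq, hbq.2.1⟩

theorem not_isEfficient_of_isCyclicChain (hrefl : ∀ i x, pref i x x) (hA : IsAlloc A X)
    {l : List Obj} (hne : l ≠ []) (hnd : l.Nodup) (hl : l.IsCyclicChain (objTradeRel pref A)) :
    ¬ IsEfficient pref X A := by
  set σ := l.formPerm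
  have hσ := List.formPerm_apply_getElem l hnd
  have himproves : ∀ i, ∀ x ∈ A i, pref i (σ x) x ∧ σ x ∈ X := by
    intro i x hx
    by_cases hxl : x ∈ l
    · obtain ⟨k, hk, rfl⟩ := List.getElem_of_mem hxl
      obtain ⟨i', j, -, hi', hj, hpref⟩ := hl k hk
      rw [hσ k hk, hA.eq_of_mem_of_mem hx hi']
      exact ⟨hpref, hA.1 j hj⟩
    · rw [List.formPerm_apply_of_notMem hxl]
      exact ⟨hrefl i x, hA.1 i hx⟩
  intro heff
  refine heff ⟨fun i => (A i).map σ.toEmbedding, ⟨fun i => ?_, fun i j hij => ?_⟩, fun hBA => ?_,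
    fun i => ?_⟩
  · intro y hy
    obtain ⟨x, hx, rfl⟩ := mem_map.1 hy
    exact (himproves i x hx).2
  · simpa using hA.2 i j hij
  · have h0 : 0 < l.length := List.length_pos_of_ne_nil hne
    obtain ⟨i, j, hij, hi, hj, -⟩ := hl 0 h0
    have hσi : σ l[0] ∈ A i := congrFun hBA i ▸ mem_map_of_mem σ.toEmbedding hi
    rw [hσ] at hσi
    exact hij (hA.eq_of_mem_of_mem hσi hj)
  · exact ⟨fun x => ⟨σ x, mem_map_of_mem σ.toEmbedding x.2⟩,
      fun _ _ h => Subtype.ext (σ.injective (Subtype.mk.inj h)), fun x => (himproves i x x.2).1⟩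

theorem IsEfficient.not_transGen_tradeRel (hrefl : ∀ i x, pref i x x) (hA : IsAlloc A X)
    (heff : IsEfficient pref X A) (p : Fin n × Obj) :
    ¬ TransGen (tradeRel pref A) p p := by
  intro h
  obtain ⟨q, hpq, -⟩ := TransGen.head'_iff.1 h
  obtain ⟨l, hne, hl⟩ := List.exists_isCyclicChain_of_transGen (transGen_objTradeRel h hpq.1)
  obtain ⟨l', hne', hnd, hl'⟩ := hl.exists_nodup hne
  exact not_isEfficient_of_isCyclicChain hrefl hA hne' hnd hl' heff

def improvementRel (pref : Fin n → Obj → Obj → Prop) (A : Fin n → Finset Obj)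
    (p q : Fin n × Obj) : Prop :=
  p.2 ∈ A p.1 ∧ q.2 ∈ A q.1 ∧ pref p.1 q.2 p.2 ∧ q.2 ≠ p.2

theorem exists_transGen_improvementRel (hA : IsAlloc A X) (hcover : univ.biUnion A = X)
    (hB : IsAlloc B X) (hBA : B ≠ A) (hPD : ∀ i, PD (pref i) (B i) (A i)) :
    ∃ p, TransGen (improvementRel pref A) p p := by
  have hcard := hA.card_eq_of_PD hcover hB hPD
  choose μ hμ hμpref using hPD
  set D : Set (Fin n × Obj) := {p | ∃ h : p.2 ∈ A p.1, (μ p.1 ⟨p.2, h⟩ : Obj) ≠ p.2}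
  have hDfin : D.Finite :=
    (Set.finite_univ.prod X.finite_toSet).subset fun p ⟨hp, _⟩ => ⟨trivial, hA.1 _ hp⟩
  have hDne : D.Nonempty := by
    by_contra hD
    have hfix : ∀ i x (hx : x ∈ A i), (μ i ⟨x, hx⟩ : Obj) = x := fun i x hx => by
      by_contra h
      exact hD ⟨(i, x), hx, h⟩
    refine hBA (funext fun i => (eq_of_subset_of_card_le (fun x hx => ?_) (hcard i).ge).symm)
    simpa only [hfix] using (μ i ⟨x, hx⟩).2
  refine hDfin.exists_transGen_self hDne fun ⟨i, x⟩ ⟨hx, hmoved⟩ => ?_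
  set y := μ i ⟨x, hx⟩
  obtain ⟨j, -, hy⟩ := mem_biUnion.1 (hcover ▸ hB.1 i y.2 : (y : Obj) ∈ univ.biUnion A)
  refine ⟨(j, y), ⟨hy, fun hfix => hmoved ?_⟩, hx, hy, hμpref i _, hmoved⟩
  obtain rfl : i = j := hB.eq_of_mem_of_mem y.2 (by simpa only [hfix] using (μ j ⟨y, hy⟩).2)
  exact congrArg Subtype.val (hμ i (Subtype.ext hfix))

theorem isEfficient_of_biUnion_eq_of_not_transGen
    (htrans : ∀ i {x y z}, pref i x y → pref i y z → pref i x z)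
    (hantisymm : ∀ i {x y}, pref i x y → pref i y x → x = y) (hA : IsAlloc A X)
    (hcover : univ.biUnion A = X) (hrobust : ∀ p, ¬ TransGen (tradeRel pref A) p p) :
    IsEfficient pref X A := by
  rintro ⟨B, hB, hBA, hPD⟩
  have hmerge : ∀ p q s, improvementRel pref A p q → improvementRel pref A q s → p.1 = q.1 →
      improvementRel pref A p s := by
    rintro ⟨i, x⟩ ⟨_, y⟩ ⟨k, z⟩ ⟨hx, -, hyx, hyx'⟩ ⟨-, hz, hzy, -⟩ rfl
    exact ⟨hx, hz, htrans i hzy hyx, fun hzx => hyx' (hantisymm i hyx (hzx ▸ hzy))⟩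
  obtain ⟨c, hc⟩ := exists_transGen_improvementRel hA hcover hB hBA hPD
  obtain ⟨p, hp⟩ := hc.exists_self_across_fibers Prod.fst (fun _ h => h.2.2.2 rfl) hmerge
  exact hrobust p (TransGen.mono (fun _ _ h => ⟨h.1.1, h.1.2.2.1, h.1.2.2.2, h.2⟩) p p hp)

theorem isEfficient_iff [NeZero n] (hlin : LinProfile pref) (hA : IsAlloc A X) :
    IsEfficient pref X A ↔
      univ.biUnion A = X ∧ ∀ p, ¬ TransGen (tradeRel pref A) p p := by
  have hrefl : ∀ i x, pref i x x := fun i => (hlin i).refl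
  exact ⟨fun h => ⟨h.biUnion_eq hrefl hA, h.not_transGen_tradeRel hrefl hA⟩,
    fun ⟨hcover, hrobust⟩ => isEfficient_of_biUnion_eq_of_not_transGen
      (fun i => (hlin i).trans _ _ _) (fun i => (hlin i).antisymm _ _) hA hcover hrobust⟩

end Allocation

theorem efficient_iff_nonwasteful_and_robust {n : ℕ} (hn : 2 ≤ n)
    (φ : (Fin n → Obj → Obj → Prop) → Finset Obj → Fin n → Finset Obj)
    (hvalid : ∀ pref, LinProfile pref → ∀ X : Finset Obj, X.Nonempty →
      IsAlloc (φ pref X) X) :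
    (∀ pref, LinProfile pref → ∀ X : Finset Obj, X.Nonempty →
        ¬ ∃ B : Fin n → Finset Obj, IsAlloc B X ∧ B ≠ φ pref X ∧
          ∀ i, PD (pref i) (B i) (φ pref X i)) ↔
      ((∀ pref, LinProfile pref → ∀ X : Finset Obj, X.Nonempty →
          Finset.univ.biUnion (φ pref X) = X) ∧
        (∀ pref, LinProfile pref → ∀ X : Finset Obj, X.Nonempty →
          ∀ p : Fin n × Obj,
            ¬ Relation.TransGen
              (fun p q : Fin n × Obj =>
                p.2 ∈ φ pref X p.1 ∧ pref p.1 q.2 p.2 ∧ q.2 ≠ p.2 ∧ p.1 ≠ q.1)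
              p p)) := by
  have : NeZero n := ⟨by omega⟩
  have key pref (hlin : LinProfile pref) X (hX : X.Nonempty) :=
    isEfficient_iff hlin (hvalid pref hlin X hX)
  exact ⟨fun heff => ⟨fun pref hlin X hX => ((key pref hlin X hX).1 (heff pref hlin X hX)).1,
      fun pref hlin X hX => ((key pref hlin X hX).1 (heff pref hlin X hX)).2⟩,
    fun ⟨hcover, hrobust⟩ pref hlin X hX =>
      (key pref hlin X hX).2 ⟨hcover pref hlin X hX, hrobust pref hlin X hX⟩⟩
end
end

section
/- For any priority π on a fixed finite agent set, the draft rule φ^π satisfies EF1: for every problem (≿, X) and any agents i, j, there exists a set S ⊆ φ^π_i(≿, X) with |S| ≤ 1 such that φ^π_j(≿, X) ≿_j^PD φ^π_i(≿, X) \ S. -/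
open Finset

noncomputable section

/-!
Every picker takes her favourite remaining object, so she weakly prefers it to everything
picked later. Under round robin, each turn `k` of `i` with `k ≥ d := (π i - π j) mod n` is
preceded, `d` steps earlier, by a turn of `j`; matching `i`'s pick at step `k` with `j`'s pick
at step `k - d` gives the dominating injection. Of the turns of `i` there is at most one before
step `d`, namely `i`'s first turn when `i` precedes `j`, and its pick is the removed set `S`.
-/

theorem Finset.Nonempty.exists_forall_rel {α : Type*} {r : α → α → Prop} [IsTrans α r]
    [Std.Total r] {s : Finset α} (hs : s.Nonempty) : ∃ m ∈ s, ∀ x ∈ s, r m x := by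
  induction hs using Finset.Nonempty.cons_induction with
  | singleton a => exact ⟨a, mem_singleton_self a, by simp [refl_of r]⟩
  | cons a s _ _ ih =>
    obtain ⟨m, hm, hmin⟩ := ih
    rcases total_of r a m with ham | hma
    · exact ⟨a, mem_cons_self a s, by
        simpa [refl_of r] using fun x hx => _root_.trans ham (hmin x hx)⟩
    · exact ⟨m, mem_cons.2 (Or.inr hm), by simpa [hma] using hmin⟩

theorem topOf_spec {r : Obj → Obj → Prop} [IsLinearOrder Obj r] {S : Finset Obj}
    (hS : S.Nonempty) : topOf r S ∈ S ∧ ∀ x ∈ S, r (topOf r S) x := by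
  have h := hS.exists_forall_rel (r := r)
  rw [topOf, dif_pos h]
  exact h.choose_spec

theorem PD.mono_right {r : Obj → Obj → Prop} {S T T' : Finset Obj} (h : PD r S T)
    (hT : T' ⊆ T) : PD r S T' := by
  obtain ⟨μ, hμ, hr⟩ := h
  refine ⟨fun x => μ ⟨x, hT x.2⟩, fun x y hxy => ?_, fun x => hr _⟩
  exact Subtype.ext (congrArg Subtype.val (hμ hxy) :)

theorem PD.image_of_injOn {r : Obj → Obj → Prop} {p : ℕ → Obj} {K K' : Finset ℕ}
    (hp : Set.InjOn p ↑(K ∪ K')) (h : ℕ → ℕ) (hmaps : Set.MapsTo h K K')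
    (hinj : Set.InjOn h K) (hr : ∀ k ∈ K, r (p (h k)) (p k)) :
    PD r (K'.image p) (K.image p) := by
  choose idx hidx hpidx using fun x : {x // x ∈ K.image p} => mem_image.1 x.2
  refine ⟨fun x => ⟨p (h (idx x)), mem_image_of_mem p (hmaps (hidx x))⟩, fun x y hxy => ?_,
    fun x => hpidx x ▸ hr _ (hidx x)⟩
  have hh : h (idx x) = h (idx y) :=
    hp (by simp [hmaps (hidx x)]) (by simp [hmaps (hidx y)]) (congrArg Subtype.val hxy)
  exact Subtype.ext (by rw [← hpidx x, ← hpidx y, hinj (hidx x) (hidx y) hh])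

section Draft

variable {n : ℕ} (pref : Fin n → Obj → Obj → Prop) (f : ℕ → Fin n) (X : Finset Obj)

def pick (k : ℕ) : Obj := topOf (pref (f k)) (remaining pref f X k)

def turns (N : ℕ) (i : Fin n) : Finset ℕ := (range N).filter (f · = i)

theorem draft_eq_image_turns (i : Fin n) :
    draft pref f X i = (turns f X.card i).image (pick pref f X) := rfl

theorem remaining_antitone : Antitone (remaining pref f X) :=
  antitone_nat_of_succ_le fun _ => erase_subset _ _

variable {pref} (hpref : LinProfile pref)
include hpref

theorem remaining_card (k : ℕ) : (remaining pref f X k).card = X.card - k := by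
  induction k with
  | zero => rfl
  | succ k ih =>
    have := hpref (f k)
    rcases (remaining pref f X k).eq_empty_or_nonempty with he | hne
    · simp only [remaining, he, erase_empty, card_empty] at ih ⊢
      omega
    · rw [remaining, card_erase_of_mem (topOf_spec hne).1, ih]
      omega

theorem remaining_nonempty {k : ℕ} (hk : k < X.card) : (remaining pref f X k).Nonempty := by
  rw [← card_pos, remaining_card f X hpref]
  omega

theorem pick_mem_remaining {k : ℕ} (hk : k < X.card) : pick pref f X k ∈ remaining pref f X k :=
  have := hpref (f k)
  (topOf_spec (remaining_nonempty f X hpref hk)).1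

theorem pick_rel_pick {k l : ℕ} (hkl : k ≤ l) (hl : l < X.card) :
    pref (f k) (pick pref f X k) (pick pref f X l) :=
  have := hpref (f k)
  (topOf_spec (remaining_nonempty f X hpref (hkl.trans_lt hl))).2 _
    (remaining_antitone pref f X hkl (pick_mem_remaining f X hpref hl))

theorem pick_injOn : Set.InjOn (pick pref f X) (Set.Iio X.card) := by
  intro k hk l hl hkl
  by_contra hne
  wlog hlt : k < l generalizing k l
  · exact this hl hk hkl.symm (Ne.symm hne) (by omega)
  have hmem := remaining_antitone pref f X hlt (pick_mem_remaining f X hpref hl)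
  exact ne_of_mem_erase hmem hkl.symm

theorem PD_draft_sdiff_of_shift {i j : Fin n} {d : ℕ}
    (hshift : ∀ k, f k = i → d ≤ k → f (k - d) = j) :
    PD (pref j) (draft pref f X j)
      (draft pref f X i \ ((turns f X.card i).filter (· < d)).image (pick pref f X)) := by
  refine PD.mono_right (T := ((turns f X.card i).filter (d ≤ ·)).image (pick pref f X)) ?_ ?_
  · rw [draft_eq_image_turns]
    refine PD.image_of_injOn ((pick_injOn f X hpref).mono ?_) (· - d) ?_ ?_ ?_
    · intro k hk
      rw [mem_coe, mem_union] at hk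
      simp only [turns, mem_filter, mem_range] at hk
      exact hk.elim (·.1.1) (·.1)
    · intro k hk
      rw [mem_coe] at hk ⊢
      simp only [turns, mem_filter, mem_range] at hk ⊢
      exact ⟨by omega, hshift k hk.1.2 hk.2⟩
    · intro k hk l hl hkl
      rw [mem_coe, mem_filter] at hk hl
      simp only at hkl
      omega
    · intro k hk
      simp only [turns, mem_filter, mem_range] at hk
      simpa [hshift k hk.1.2 hk.2] using pick_rel_pick f X hpref (Nat.sub_le k d) hk.1.1
  · intro x hx
    simp only [draft_eq_image_turns, mem_sdiff, mem_image, mem_filter, not_exists, not_and] at hx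
    obtain ⟨⟨k, hk, rfl⟩, hnot⟩ := hx
    exact mem_image.2 ⟨k, mem_filter.2 ⟨hk, not_lt.1 fun h => hnot k ⟨hk, h⟩ rfl⟩, rfl⟩

end Draft

theorem Nat.sub_mod_add_modEq {a b n : ℕ} (hb : b ≤ n) : (a + n - b) % n + b ≡ a [MOD n] :=
  calc (a + n - b) % n + b ≡ a + n - b + b [MOD n] := Nat.ModEq.add_right _ (Nat.mod_modEq _ _)
    _ = a + n := by omega
    _ ≡ a [MOD n] := Nat.add_modEq_right

section RoundRobin

variable {n : ℕ} (hn : 0 < n) (π : Equiv.Perm (Fin n))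

theorem roundRobin_eq_iff {k : ℕ} {a : Fin n} : roundRobin hn π k = a ↔ k % n = π a := by
  rw [roundRobin, Equiv.symm_apply_eq, Fin.ext_iff]

theorem roundRobin_sub {i j : Fin n} {d k : ℕ} (hdj : d + π j ≡ π i [MOD n])
    (hk : roundRobin hn π k = i) (hd : d ≤ k) : roundRobin hn π (k - d) = j := by
  rw [roundRobin_eq_iff] at hk ⊢
  have hkd : k - d + d ≡ π j + d [MOD n] := by
    rw [Nat.sub_add_cancel hd, add_comm]
    exact (hk.trans (Nat.mod_eq_of_lt (π i).2).symm).trans hdj.symm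
  exact Eq.trans (Nat.ModEq.add_right_cancel' d hkd) (Nat.mod_eq_of_lt (π j).2)

theorem card_turns_roundRobin_lt_le_one (N : ℕ) (i : Fin n) {d : ℕ} (hd : d ≤ n) :
    ((turns (roundRobin hn π) N i).filter (· < d)).card ≤ 1 := by
  refine card_le_one.2 fun k hk l hl => ?_
  simp only [turns, mem_filter, roundRobin_eq_iff] at hk hl
  rw [← Nat.mod_eq_of_lt (hk.2.trans_le hd), hk.1.2, ← hl.1.2,
    Nat.mod_eq_of_lt (hl.2.trans_le hd)]

end RoundRobin

theorem draft_EF1_general {n : ℕ} (hn : 0 < n) (π : Equiv.Perm (Fin n))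
    (pref : Fin n → Obj → Obj → Prop) (hpref : LinProfile pref)
    (X : Finset Obj) (i j : Fin n) :
    ∃ S ⊆ draftPi hn pref π X i, S.card ≤ 1 ∧
      PD (pref j) (draftPi hn pref π X j) (draftPi hn pref π X i \ S) := by
  set d := ((π i : ℕ) + n - π j) % n
  have hdj : d + π j ≡ π i [MOD n] := Nat.sub_mod_add_modEq (π j).2.le
  refine ⟨((turns (roundRobin hn π) X.card i).filter (· < d)).image
    (pick pref (roundRobin hn π) X), image_subset_image (filter_subset _ _),
    card_image_le.trans ?_, ?_⟩
  · exact card_turns_roundRobin_lt_le_one hn π X.card i (Nat.mod_lt _ hn).le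
  · exact PD_draft_sdiff_of_shift _ X hpref fun k hk hdk => roundRobin_sub hn π hdj hk hdk

theorem draft_EF1 {n : ℕ} (hn : 0 < n) (π : Equiv.Perm (Fin n))
    (pref : Fin n → Obj → Obj → Prop) (hpref : LinProfile pref)
    (X : Finset Obj) (hX : X.Nonempty) (i j : Fin n) :
    ∃ S ⊆ draftPi hn pref π X i, S.card ≤ 1 ∧
      PD (pref j) (draftPi hn pref π X j) (draftPi hn pref π X i \ S) :=
  draft_EF1_general hn π pref hpref X i j
end
end

section
/- For any draft rule φ^π, any agent i, any available set X, any truthful preference ≿_i, and any misreport ≿'_i, if all other agents report the same preference as i's truthful preference ≿_i, then i's truthful bundle pairwise-dominates her misreporting bundle: φ^π_i((≿_i, ≿_{-i}), X) ≿_i^PD φ^π_i((≿'_i, ≿_{-i}), X), where ≿_j = ≿_i for all j ≠ i. -/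
open Finset

noncomputable section

/-!
With the other agents reporting `r`, fix `y` and let `U` be the set of objects `r`-weakly better
than `y`, `M = #U`. At every step `k < M` at most `k` objects are gone, so some element of `U`
is still available, and an agent reporting `r` picks inside `U`. Hence in the truthful run the
first `M` picks exhaust `U`, so `i` receives exactly her turns before `M` from `U`; in a
misreport run the other agents already take their turns before `M` from `U`, leaving `i` at most
her own turns before `M`. So for every `y`, `i`'s truthful bundle has at least as many objects
weakly better than `y` as her misreport bundle, and Hall's theorem turns these counts into an
injection witnessing pairwise dominance.
-/

namespace Draft

theorem exists_mem_forall_rel {α : Type*} {r : α → α → Prop} [IsTrans α r] [Std.Total r]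
    {s : Finset α} (hs : s.Nonempty) : ∃ m ∈ s, ∀ x ∈ s, r m x := by
  induction hs using Finset.Nonempty.cons_induction with
  | singleton a => exact ⟨a, mem_singleton_self a, fun x hx => mem_singleton.1 hx ▸ refl_of r a⟩
  | cons a s ha hs ih =>
    obtain ⟨m, hm, hmin⟩ := ih
    rcases total_of r a m with ham | hma
    · exact ⟨a, mem_cons_self a s, (forall_mem_cons ha _).2
        ⟨refl_of r a, fun x hx => trans_of r ham (hmin x hx)⟩⟩
    · exact ⟨m, mem_cons_of_mem hm, (forall_mem_cons ha _).2 ⟨hma, hmin⟩⟩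

theorem topOf_spec {r : Obj → Obj → Prop} (hr : IsLinearOrder Obj r) {s : Finset Obj}
    (hs : s.Nonempty) : topOf r s ∈ s ∧ ∀ x ∈ s, r (topOf r s) x := by
  have h := exists_mem_forall_rel (r := r) hs
  rw [topOf, dif_pos h]
  exact h.choose_spec

def pick {n : ℕ} (pref : Fin n → Obj → Obj → Prop) (f : ℕ → Fin n) (X : Finset Obj)
    (k : ℕ) : Obj :=
  topOf (pref (f k)) (remaining pref f X k)

section Run

variable {n : ℕ} {pref : Fin n → Obj → Obj → Prop} {f : ℕ → Fin n} {X : Finset Obj}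

theorem remaining_succ (k : ℕ) :
    remaining pref f X (k + 1) = (remaining pref f X k).erase (pick pref f X k) := rfl

theorem draft_eq_image (i : Fin n) :
    draft pref f X i = ((range #X).filter (f · = i)).image (pick pref f X) := rfl

theorem remaining_antitone : Antitone (remaining pref f X) :=
  antitone_nat_of_succ_le fun _ => erase_subset _ _

theorem remaining_subset (k : ℕ) : remaining pref f X k ⊆ X :=
  remaining_antitone (Nat.zero_le k)

theorem card_remaining (hpref : LinProfile pref) {k : ℕ} (hk : k ≤ #X) :
    #(remaining pref f X k) = #X - k := by
  induction k with
  | zero => rfl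
  | succ k ih =>
    have hcard := ih (by omega)
    have hne : (remaining pref f X k).Nonempty := by rw [← card_pos, hcard]; omega
    have hmem : pick pref f X k ∈ remaining pref f X k := (topOf_spec (hpref (f k)) hne).1
    rw [remaining_succ, card_erase_of_mem hmem, hcard]
    omega

theorem pick_mem_remaining (hpref : LinProfile pref) {k : ℕ} (hk : k < #X) :
    pick pref f X k ∈ remaining pref f X k :=
  (topOf_spec (hpref (f k)) (card_pos.1 (by rw [card_remaining hpref hk.le]; omega))).1

theorem rel_pick (hpref : LinProfile pref) {k : ℕ} {b : Obj}
    (hb : b ∈ remaining pref f X k) : pref (f k) (pick pref f X k) b :=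
  (topOf_spec (hpref (f k)) ⟨b, hb⟩).2 b hb

theorem pick_notMem_remaining {k l : ℕ} (hkl : k < l) :
    pick pref f X k ∉ remaining pref f X l :=
  fun h => notMem_erase _ _ (remaining_antitone hkl h)

theorem pick_injOn (hpref : LinProfile pref) : Set.InjOn (pick pref f X) (Set.Iio #X) := by
  intro k hk l hl h
  by_contra hne
  rcases Nat.lt_or_gt_of_ne hne with hkl | hlk
  · exact pick_notMem_remaining hkl (h ▸ pick_mem_remaining hpref hl)
  · exact pick_notMem_remaining hlk (h ▸ pick_mem_remaining hpref hk)

theorem card_image_pick (hpref : LinProfile pref) {s : Finset ℕ} (hs : s ⊆ range #X) :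
    #(s.image (pick pref f X)) = #s :=
  card_image_of_injOn ((pick_injOn hpref).mono fun k hk => by simpa using hs hk)

variable {r : Obj → Obj → Prop} [DecidableRel r]

theorem exists_mem_remaining_rel (hpref : LinProfile pref) {y : Obj} {k : ℕ}
    (hk : k < #(X.filter (r · y))) : ∃ b ∈ remaining pref f X k, r b y := by
  by_contra! h
  have hsub : remaining pref f X k ⊆ X.filter (¬ r · y) :=
    fun b hb => mem_filter.2 ⟨remaining_subset k hb, h b hb⟩
  have hle := card_le_card hsub
  rw [card_remaining hpref (hk.le.trans (card_filter_le _ _))] at hle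
  have hsplit := card_filter_add_card_filter_not (s := X) (r · y)
  omega

theorem rel_pick_of_lt_card_filter (hpref : LinProfile pref) {y : Obj} {k : ℕ}
    (hfk : pref (f k) = r) (hk : k < #(X.filter (r · y))) : r (pick pref f X k) y := by
  obtain ⟨b, hb, hby⟩ := exists_mem_remaining_rel hpref hk
  have : IsLinearOrder Obj r := hfk ▸ hpref (f k)
  exact trans_of r (hfk ▸ rel_pick hpref hb) hby

theorem card_filter_range_le_card_filter_draft_const (hr : IsLinearOrder Obj r) (i : Fin n)
    (y : Obj) : #((range #(X.filter (r · y))).filter (f · = i))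
      ≤ #((draft (fun _ => r) f X i).filter (r · y)) := by
  have hprof : LinProfile (fun _ : Fin n => r) := fun _ => hr
  have hM : #(X.filter (r · y)) ≤ #X := card_filter_le _ _
  rw [← card_image_pick (pref := fun _ => r) (f := f) hprof
    ((filter_subset _ _).trans (range_subset_range.2 hM))]
  refine card_le_card fun x hx => ?_
  obtain ⟨k, hk, rfl⟩ := mem_image.1 hx
  rw [mem_filter, mem_range] at hk
  refine mem_filter.2 ⟨mem_image_of_mem _ (mem_filter.2 ⟨mem_range.2 (by omega), hk.2⟩), ?_⟩
  exact rel_pick_of_lt_card_filter hprof rfl hk.1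

theorem card_filter_draft_le (hpref : LinProfile pref) {i : Fin n}
    (hothers : ∀ j ≠ i, pref j = r) (y : Obj) :
    #((draft pref f X i).filter (r · y)) ≤ #((range #(X.filter (r · y))).filter (f · = i)) := by
  set M := #(X.filter (r · y))
  set E := (range #X).filter (fun k => r (pick pref f X k) y)
  have hM : M ≤ #X := card_filter_le _ _
  have hE : #E ≤ M := by
    rw [← card_image_pick hpref (filter_subset _ _)]
    refine card_le_card fun x hx => ?_
    obtain ⟨k, hk, rfl⟩ := mem_image.1 hx
    rw [mem_filter, mem_range] at hk
    exact mem_filter.2 ⟨remaining_subset k (pick_mem_remaining hpref hk.1), hk.2⟩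
  have hdraft : (draft pref f X i).filter (r · y) = (E.filter (f · = i)).image (pick pref f X) := by
    rw [draft_eq_image, filter_image, filter_filter, filter_filter]
    simp only [and_comm]
  have hothers_in_E : (range M).filter (¬ f · = i) ⊆ E.filter (¬ f · = i) := fun k hk => by
    rw [mem_filter, mem_range] at hk
    exact mem_filter.2 ⟨mem_filter.2 ⟨mem_range.2 (by omega),
      rel_pick_of_lt_card_filter hpref (hothers _ hk.2) hk.1⟩, hk.2⟩
  have hsplitE := card_filter_add_card_filter_not (s := E) (f · = i)
  have hsplitM := card_filter_add_card_filter_not (s := range M) (f · = i)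
  have hothers_card := card_le_card hothers_in_E
  rw [card_range] at hsplitM
  rw [hdraft, card_image_pick hpref ((filter_subset _ E).trans (filter_subset _ _))]
  omega

end Run

theorem pd_of_card_filter_le {r : Obj → Obj → Prop} [DecidableRel r] (hr : IsLinearOrder Obj r)
    {S T : Finset Obj} (h : ∀ y ∈ T, #(T.filter (r · y)) ≤ #(S.filter (r · y))) : PD r S T := by
  let t : {x // x ∈ T} → Finset Obj := fun y => S.filter (r · y)
  have hall : ∀ A : Finset {x // x ∈ T}, #A ≤ #(A.biUnion t) := by
    intro A
    rcases A.eq_empty_or_nonempty with rfl | hA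
    · simp
    obtain ⟨_, hyA, hworst⟩ := exists_mem_forall_rel (r := Function.swap r) (hA.image Subtype.val)
    obtain ⟨y, hy, rfl⟩ := mem_image.1 hyA
    calc #A = #(A.image Subtype.val) := (card_image_of_injective _ Subtype.val_injective).symm
      _ ≤ #(T.filter (r · y)) := card_le_card fun x hx =>
          mem_filter.2 ⟨by obtain ⟨a, -, rfl⟩ := mem_image.1 hx; exact a.2, hworst x hx⟩
      _ ≤ #(t y) := h y y.2
      _ ≤ #(A.biUnion t) := card_le_card (subset_biUnion_of_mem t hy)
  obtain ⟨g, hg, hgt⟩ := (all_card_le_biUnion_card_iff_exists_injective t).1 hall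
  exact ⟨fun y => ⟨g y, (mem_filter.1 (hgt y)).1⟩, fun a b hab => hg (congrArg Subtype.val hab),
    fun y => (mem_filter.1 (hgt y)).2⟩

end Draft

open Draft in
theorem draft_truthful_vs_misreport_identical_others_general {n : ℕ} (hn : 0 < n)
    (π : Equiv.Perm (Fin n)) (X : Finset Obj) (i : Fin n)
    (r : Obj → Obj → Prop) (hr : IsLinearOrder Obj r)
    (r' : Obj → Obj → Prop) (hr' : IsLinearOrder Obj r') :
    PD r (draftPi hn (fun _ => r) π X i)
      (draftPi hn (Function.update (fun _ => r) i r') π X i) := by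
  classical
  have hprof : LinProfile (Function.update (fun _ => r) i r') := by
    intro j
    rcases eq_or_ne j i with rfl | hj
    · simpa using hr'
    · simpa [Function.update_of_ne hj] using hr
  refine pd_of_card_filter_le hr fun y _ => ?_
  exact (card_filter_draft_le hprof (fun j hj => Function.update_of_ne hj _ _) y).trans
    (card_filter_range_le_card_filter_draft_const hr i y)

theorem draft_truthful_vs_misreport_identical_others {n : ℕ} (hn : 0 < n)
    (π : Equiv.Perm (Fin n)) (X : Finset Obj) (hX : X.Nonempty) (i : Fin n)
    (r : Obj → Obj → Prop) (hr : IsLinearOrder Obj r)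
    (r' : Obj → Obj → Prop) (hr' : IsLinearOrder Obj r') :
    PD r (draftPi hn (fun _ => r) π X i)
      (draftPi hn (Function.update (fun _ => r) i r') π X i) :=
  draft_truthful_vs_misreport_identical_others_general hn π X i r hr r' hr'
end
end

section
/- If an allocation rule on the domain with unacceptable objects satisfies individual rationality, truncation-proofness, and extension-proofness, then it satisfies truncation invariance: whenever ≿'_i is a truncation of ≿_i with φ_i(≿, X) ⊆ U(≿'_i), one has φ_i((≿'_i, ≿_{-i}), X) = φ_i(≿, X). -/
open Finset

noncomputable section

/-- A preference in the domain with unacceptable objects: a relation on `Option Obj`,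
where `none` is the null object ω.  `x` is acceptable at `r` iff `r (some x) none`. -/
abbrev PrefU := Option Obj → Option Obj → Prop

def LinProfileU {n : ℕ} (pref : Fin n → PrefU) : Prop :=
  ∀ i, IsLinearOrder (Option Obj) (pref i)

def IsAllocU {n : ℕ} (A : Fin n → Finset Obj) (X : Finset Obj) : Prop :=
  (∀ i, A i ⊆ X) ∧ ∀ i j, i ≠ j → Disjoint (A i) (A j)

/-- Pairwise dominance extension ignoring unacceptable objects: an injection from the
acceptable part of `T` into the acceptable part of `S` that weakly improves each element. -/
def PDA (r : PrefU) (S T : Finset Obj) : Prop :=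
  ∃ μ : {x : Obj // x ∈ T ∧ r (some x) none} → {x : Obj // x ∈ S ∧ r (some x) none},
    Function.Injective μ ∧ ∀ x, r (some (μ x).1) (some x.1)

/-- `r'` is a truncation of `r`: the acceptable set of `r'` is an upper contour set
`U(r, x)` of some object `x` acceptable at `r`, and the two orders agree on it. -/
def Truncation (r' r : PrefU) : Prop :=
  (∃ x : Obj, r (some x) none ∧
    ∀ y : Obj, (r' (some y) none ↔ r (some y) (some x))) ∧
  ∀ y z : Obj, r' (some y) none → r' (some z) none →
    (r' (some y) (some z) ↔ r (some y) (some z))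

/-!
Write `A` and `B` for agent `i`'s bundles before and after she reports the truncation `≿'ᵢ`.
Truncation-proofness gives `A ≿ᵢ^PD B`; extension-proofness, applied at the truncated profile,
gives `B ≿'ᵢ^PD A`, and since `A ⊆ U(≿'ᵢ)` and the two orders agree there, `B ≿ᵢ^PD A`.
Pairwise dominance is antisymmetric on acceptable sets: composing the two injections gives an
injective self-map of the finite set `A` improving every object, and such a map is the identity
because every object lies on a cycle. Individual rationality makes `A` and `B` acceptable.
-/

open Function

lemma rel_iterate_of_forall_rel_apply {α β : Type*} (r : α → α → Prop) [IsPreorder α r]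
    (e : β → α) {f : β → β} (h : ∀ x, r (e (f x)) (e x)) (x : β) :
    ∀ m, r (e (f^[m] x)) (e x)
  | 0 => refl_of r _
  | m + 1 => by
    rw [iterate_succ_apply']
    exact trans_of r (h _) (rel_iterate_of_forall_rel_apply r e h x m)

/-- Every point lies on a cycle of `f`, and going once around it leads back to the start. -/
lemma Function.Injective.eq_of_forall_rel_apply {α β : Type*} [Finite β] (r : α → α → Prop)
    [IsPartialOrder α r] (e : β → α) {f : β → β} (hf : Injective f)
    (h : ∀ x, r (e (f x)) (e x)) (x : β) : e (f x) = e x := by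
  obtain ⟨n, hn, hper⟩ := hf.mem_periodicPts x
  obtain ⟨k, rfl⟩ : ∃ k, n = k + 1 := ⟨n - 1, by omega⟩
  have hback : r (e x) (e (f x)) := by
    simpa only [← iterate_succ_apply, hper.eq] using rel_iterate_of_forall_rel_apply r e h (f x) k
  exact antisymm (h x) hback

section PDA

variable {r : PrefU} {S T : Finset Obj}

lemma PDA.mem_of_mem [IsPartialOrder (Option Obj) r] (hST : PDA r S T) (hTS : PDA r T S)
    {x : Obj} (hxS : x ∈ S) (hx : r (some x) none) : x ∈ T := by
  obtain ⟨μ, hμ_inj, hμ⟩ := hST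
  obtain ⟨ν, hν_inj, hν⟩ := hTS
  have : Finite {y : Obj // y ∈ S ∧ r (some y) none} :=
    Finite.of_injective (fun y => (⟨y.1, y.2.1⟩ : S)) fun _ _ h => Subtype.ext (Subtype.mk.inj h)
  let x' : {y : Obj // y ∈ S ∧ r (some y) none} := ⟨x, hxS, hx⟩
  have hfix : some (μ (ν x')).1 = some x :=
    (Injective.comp hμ_inj hν_inj).eq_of_forall_rel_apply r (fun y => some y.1)
      (fun y => trans_of r (hμ _) (hν _)) x'
  have hνx : (ν x').1 = x := Option.some_injective _ <| antisymm (hν x') (hfix ▸ hμ (ν x'))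
  exact hνx ▸ (ν x').2.1

lemma PDA.antisymm [IsPartialOrder (Option Obj) r] (hST : PDA r S T) (hTS : PDA r T S)
    (hS : ∀ x ∈ S, r (some x) none) (hT : ∀ x ∈ T, r (some x) none) : S = T :=
  Subset.antisymm (fun x hx => hST.mem_of_mem hTS hx (hS x hx))
    (fun x hx => hTS.mem_of_mem hST hx (hT x hx))

variable {r' : PrefU}

lemma Truncation.acceptable [IsTrans (Option Obj) r] (h : Truncation r' r) {y : Obj}
    (hy : r' (some y) none) : r (some y) none :=
  let ⟨⟨_, hx, hU⟩, _⟩ := h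
  trans_of r ((hU y).1 hy) hx

lemma PDA.of_truncation [IsTrans (Option Obj) r] (h : Truncation r' r)
    (hT : ∀ y ∈ T, r' (some y) none) (hST : PDA r' S T) : PDA r S T := by
  obtain ⟨ν, hν_inj, hν⟩ := hST
  let lift (y : {y : Obj // y ∈ T ∧ r (some y) none}) : {y : Obj // y ∈ T ∧ r' (some y) none} :=
    ⟨y.1, y.2.1, hT y.1 y.2.1⟩
  refine ⟨fun y => ⟨(ν (lift y)).1, (ν (lift y)).2.1, h.acceptable (ν (lift y)).2.2⟩,
    fun a b hab => Subtype.ext (Subtype.mk.inj (hν_inj (Subtype.ext (Subtype.mk.inj hab)))),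
    fun y => (h.2 _ _ (ν (lift y)).2.2 (lift y).2.2).1 (hν (lift y))⟩

end PDA

lemma LinProfileU.update {n : ℕ} {pref : Fin n → PrefU} (hpref : LinProfileU pref) (i : Fin n)
    {r' : PrefU} (hr' : IsLinearOrder (Option Obj) r') : LinProfileU (update pref i r') := by
  intro j
  rcases eq_or_ne j i with rfl | hj
  · rwa [update_self]
  · rw [update_of_ne hj]
    exact hpref j

theorem IR_TP_EP_implies_TI_general {n : ℕ}
    (φ : (Fin n → PrefU) → Finset Obj → Fin n → Finset Obj)
    -- individual rationality: only acceptable objects are ever assigned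
    (hIR : ∀ pref, LinProfileU pref → ∀ X : Finset Obj, X.Nonempty →
      ∀ i : Fin n, ∀ y ∈ φ pref X i, (pref i) (some y) none)
    -- truncation-proofness
    (hTP : ∀ pref, LinProfileU pref → ∀ X : Finset Obj, X.Nonempty →
      ∀ i : Fin n, ∀ r' : PrefU, IsLinearOrder (Option Obj) r' →
        Truncation r' (pref i) →
        PDA (pref i) (φ pref X i) (φ (Function.update pref i r') X i))
    -- extension-proofness
    (hEP : ∀ pref, LinProfileU pref → ∀ X : Finset Obj, X.Nonempty →
      ∀ i : Fin n, ∀ r' : PrefU, IsLinearOrder (Option Obj) r' →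
        Truncation (pref i) r' →
        PDA (pref i) (φ pref X i) (φ (Function.update pref i r') X i)) :
    -- truncation invariance
    ∀ pref, LinProfileU pref → ∀ X : Finset Obj, X.Nonempty →
      ∀ i : Fin n, ∀ r' : PrefU, IsLinearOrder (Option Obj) r' →
        Truncation r' (pref i) →
        (∀ y ∈ φ pref X i, r' (some y) none) →
        φ (Function.update pref i r') X i = φ pref X i := by
  intro pref hpref X hX i r' hr' htr hA
  have hpref' := hpref.update i hr'
  have hlin := hpref i
  have hAB : PDA (pref i) (φ pref X i) (φ (update pref i r') X i) :=
    hTP pref hpref X hX i r' hr' htr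
  have hBA : PDA r' (φ (update pref i r') X i) (φ pref X i) := by
    simpa only [update_self, update_idem, update_eq_self] using
      hEP _ hpref' X hX i (pref i) hlin (by rwa [update_self])
  refine (hAB.antisymm (hBA.of_truncation htr hA) (hIR pref hpref X hX i) fun y hy => ?_).symm
  exact htr.acceptable (by simpa only [update_self] using hIR _ hpref' X hX i y hy)

theorem IR_TP_EP_implies_TI {n : ℕ} (hn : 2 ≤ n)
    (φ : (Fin n → PrefU) → Finset Obj → Fin n → Finset Obj)
    (hvalid : ∀ pref, LinProfileU pref → ∀ X : Finset Obj, X.Nonempty →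
      IsAllocU (φ pref X) X)
    -- individual rationality: only acceptable objects are ever assigned
    (hIR : ∀ pref, LinProfileU pref → ∀ X : Finset Obj, X.Nonempty →
      ∀ i : Fin n, ∀ y ∈ φ pref X i, (pref i) (some y) none)
    -- truncation-proofness
    (hTP : ∀ pref, LinProfileU pref → ∀ X : Finset Obj, X.Nonempty →
      ∀ i : Fin n, ∀ r' : PrefU, IsLinearOrder (Option Obj) r' →
        Truncation r' (pref i) →
        PDA (pref i) (φ pref X i) (φ (Function.update pref i r') X i))
    -- extension-proofness
    (hEP : ∀ pref, LinProfileU pref → ∀ X : Finset Obj, X.Nonempty →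
      ∀ i : Fin n, ∀ r' : PrefU, IsLinearOrder (Option Obj) r' →
        Truncation (pref i) r' →
        PDA (pref i) (φ pref X i) (φ (Function.update pref i r') X i)) :
    -- truncation invariance
    ∀ pref, LinProfileU pref → ∀ X : Finset Obj, X.Nonempty →
      ∀ i : Fin n, ∀ r' : PrefU, IsLinearOrder (Option Obj) r' →
        Truncation r' (pref i) →
        (∀ y ∈ φ pref X i, r' (some y) none) →
        φ (Function.update pref i r') X i = φ pref X i :=
  IR_TP_EP_implies_TI_general φ hIR hTP hEP
end
end
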